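/- arXiv:2407.05046 — 3 statements merged into one kernel-verified Lean document; each statement's English description precedes it below -/
import Mathlib

section
/- In the nonlinear-combination example (Section 4.3): for x ∈ ℝ, consider the constraint set 𝕐(x) = {(y₁, y₂) ∈ ℝ₊ × ℝ : y₁ y₂ = x} and the function h(y₁, y₂) = ln(1 + (y₁²/(y₂²+1) − 1)²). Then the minimum value of h over 𝕐(x) is 0, attained uniquely at y₁ = √((1 + √(1 + 4x²))/2) and y₂ = x · √(2/(1 + √(1 + 4x²))). -/
theorem stmt13 (x : ℝ)
    (h : ℝ × ℝ → ℝ) (hh : ∀ y : ℝ × ℝ, h y = Real.log (1 + (y.1^2/(y.2^2+1) - 1)^2))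
    (S : Set (ℝ × ℝ)) (hS : S = {y | 0 ≤ y.1 ∧ y.1 * y.2 = x})
    (y₁ y₂ : ℝ)
    (hy₁ : y₁ = Real.sqrt ((1 + Real.sqrt (1 + 4*x^2))/2))
    (hy₂ : y₂ = x * Real.sqrt (2/(1 + Real.sqrt (1 + 4*x^2)))) :
    (y₁, y₂) ∈ S ∧ h (y₁, y₂) = 0 ∧
    (∀ y ∈ S, 0 ≤ h y ∧ (h y = 0 → y = (y₁, y₂))) := by
  have hsq : Real.sqrt (1 + 4*x^2) ^ 2 = 1 + 4*x^2 := Real.sq_sqrt (by positivity)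
  set s := Real.sqrt (1 + 4*x^2) with hsdef
  have hs1 : 1 ≤ s := by
    nlinarith [Real.sqrt_nonneg (1 + 4*x^2), hsq, sq_nonneg (s - 1)]
  set a := (1 + s) / 2 with hadef
  have ha1 : 1 ≤ a := by rw [hadef]; linarith
  have ha0 : 0 < a := by linarith
  clear_value s
  have haq : a ^ 2 - a = x ^ 2 := by rw [hadef]; nlinarith
  clear_value a
  have hy1sq : y₁ ^ 2 = a := by rw [hy₁]; exact Real.sq_sqrt (by linarith)
  have hy1nn : 0 ≤ y₁ := by rw [hy₁]; exact Real.sqrt_nonneg _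
  have hy1pos : 0 < y₁ := by nlinarith
  have hinv : Real.sqrt (2/(1+s)) = 1 / y₁ := by
    have : 2/(1+s) = a⁻¹ := by rw [hadef]; field_simp
    rw [this, Real.sqrt_inv, hy₁, hadef, inv_eq_one_div]
  have hy2eq : y₂ = x / y₁ := by rw [hy₂, hinv]; ring
  have hmul : y₁ * y₂ = x := by
    rw [hy2eq]; field_simp
  have hy2sq : y₂ ^ 2 = x ^ 2 / a := by
    rw [hy2eq, div_pow, hy1sq]
  have hratio : y₁ ^ 2 / (y₂ ^ 2 + 1) = 1 := by
    rw [hy1sq, hy2sq]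
    rw [div_eq_one_iff_eq (by positivity)]
    field_simp
    nlinarith
  refine ⟨by rw [hS]; exact ⟨hy1nn, hmul⟩, ?_, ?_⟩
  · rw [hh]; simp [hratio]
  · intro y hy
    rw [hS] at hy
    obtain ⟨hynn, hyx⟩ := hy
    have hden : (0:ℝ) < y.2 ^ 2 + 1 := by positivity
    constructor
    · rw [hh]
      apply Real.log_nonneg
      nlinarith [sq_nonneg (y.1^2/(y.2^2+1) - 1)]
    · intro h0
      rw [hh] at h0
      set t := y.1^2/(y.2^2+1) - 1 with htdef
      have := Real.log_eq_zero.mp h0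
      have ht : t^2 = 0 := by
        rcases this with h' | h' | h' <;> linarith [sq_nonneg t]
      have ht0 : t = 0 := sq_eq_zero_iff.mp ht
      rw [htdef] at ht0
      have heq : y.1 ^ 2 = y.2 ^ 2 + 1 := by
        have := sub_eq_zero.mp ht0
        field_simp at this
        linarith
      have hu : y.1 ^ 2 * (y.1 ^ 2 - 1) = x ^ 2 := by
        rw [show y.1 ^ 2 - 1 = y.2 ^ 2 by linarith, ← hyx]; ring
      have hu1 : 1 ≤ y.1 ^ 2 := by nlinarith [sq_nonneg y.2]
      have hua : y.1 ^ 2 = a := by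
        have key : (y.1 ^ 2 - a) * (y.1 ^ 2 + a - 1) = 0 := by
          linear_combination hu - haq
        rcases mul_eq_zero.mp key with k | k
        · linarith
        · linarith
      have h1 : y.1 = y₁ := by
        have key2 : (y.1 - y₁) * (y.1 + y₁) = 0 := by
          linear_combination hua - hy1sq
        rcases mul_eq_zero.mp key2 with k | k
        · linarith
        · linarith
      have h2 : y.2 = y₂ := by
        have : y₁ * y.2 = y₁ * y₂ := by rw [hmul, ← h1]; exact hyx
        exact mul_left_cancel₀ (ne_of_gt hy1pos) this
      exact Prod.ext h1 h2
end

section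
/- In the min-max subproblem of Section 4.4: for fixed x = (x₁, x₂) ∈ ℝ², define the curve s_x(t) = (t, t³ + x₁, (t − x₂)^{1/3}) for t ∈ ℝ, and for M ≥ 0 the intervals I_x¹(M) = [−M, M], I_x²(M) = [(−M−x₁)^{1/3}, (M−x₁)^{1/3}], I_x³(M) = [−M³ + x₂, M³ + x₂]. Then M(x) := min{M ≥ 0 : I_x¹(M) ∩ I_x²(M) ∩ I_x³(M) ≠ ∅} is well-defined (the set is nonempty and the min is attained), the intersection I_x(M(x)) is a single point T(x), and the sup-norm minimization min over t ∈ ℝ of max{|t|, |t³ + x₁|, |(t − x₂)^{1/3}|} equals M(x) and is attained at t = T(x). -/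
noncomputable def cbrt (z : ℝ) : ℝ := Real.sign z * |z| ^ ((1:ℝ)/3)

lemma cube_strictMono : StrictMono fun a : ℝ => a ^ 3 :=
  Odd.strictMono_pow (by decide)

lemma cube_cbrt (z : ℝ) : (cbrt z) ^ 3 = z := by
  rcases lt_trichotomy z 0 with hz | rfl | hz
  · rw [cbrt, Real.sign_of_neg hz, abs_of_neg hz, neg_one_mul, Odd.neg_pow (by decide),
      ← Real.rpow_natCast ((-z) ^ ((1:ℝ)/3)) 3, ← Real.rpow_mul (by linarith)]
    norm_num
  · simp [cbrt]
  · rw [cbrt, Real.sign_of_pos hz, abs_of_pos hz, one_mul,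
      ← Real.rpow_natCast (z ^ ((1:ℝ)/3)) 3, ← Real.rpow_mul hz.le]
    norm_num

lemma cbrt_cube (t : ℝ) : cbrt (t ^ 3) = t :=
  cube_strictMono.injective (cube_cbrt _)

lemma cbrt_strictMono : StrictMono cbrt := fun a b h =>
  cube_strictMono.lt_iff_lt.mp (by rw [cube_cbrt, cube_cbrt]; exact h)

lemma abs_cbrt (z : ℝ) : |cbrt z| = |z| ^ ((1:ℝ)/3) := by
  rcases eq_or_ne z 0 with rfl | hz
  · simp [cbrt]
  · rw [cbrt, abs_mul, abs_of_nonneg (Real.rpow_nonneg (abs_nonneg z) _)]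
    rcases Real.sign_apply_eq_of_ne_zero z hz with h | h <;> rw [h] <;> norm_num

lemma mem_iff (x₁ x₂ M t : ℝ) :
    (t ∈ Set.Icc (-M) M ∩ Set.Icc (cbrt (-M - x₁)) (cbrt (M - x₁)) ∩
      Set.Icc (-M^3 + x₂) (M^3 + x₂)) ↔
    max |t| (max |t^3 + x₁| |cbrt (t - x₂)|) ≤ M := by
  have h2 : ∀ a : ℝ, cbrt a ≤ t ↔ a ≤ t ^ 3 := by
    intro a
    rw [← cbrt_cube t, cbrt_strictMono.le_iff_le, cbrt_cube]
  have h2' : ∀ a : ℝ, t ≤ cbrt a ↔ t ^ 3 ≤ a := by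
    intro a
    rw [← cbrt_cube t, cbrt_strictMono.le_iff_le, cbrt_cube]
  have h3 : |cbrt (t - x₂)| ≤ M ↔ |t - x₂| ≤ M ^ 3 := by
    rw [← cube_strictMono.le_iff_le, ← abs_pow, cube_cbrt]
  simp only [Set.mem_inter_iff, Set.mem_Icc, max_le_iff, abs_le, h2, h2', h3]
  constructor
  · rintro ⟨⟨⟨a1, a2⟩, b1, b2⟩, c1, c2⟩
    refine ⟨⟨a1, a2⟩, ⟨by linarith, by linarith⟩, by linarith, by linarith⟩
  · rintro ⟨⟨a1, a2⟩, ⟨b1, b2⟩, c1, c2⟩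
    refine ⟨⟨⟨a1, a2⟩, by linarith, by linarith⟩, by linarith, by linarith⟩
theorem stmt14 (x₁ x₂ : ℝ)
    (I₁ I₂ I₃ : ℝ → Set ℝ)
    (hI₁ : ∀ M, I₁ M = Set.Icc (-M) M)
    (hI₂ : ∀ M, I₂ M = Set.Icc (cbrt (-M - x₁)) (cbrt (M - x₁)))
    (hI₃ : ∀ M, I₃ M = Set.Icc (-M^3 + x₂) (M^3 + x₂))
    (A : Set ℝ) (hA : A = {M | 0 ≤ M ∧ (I₁ M ∩ I₂ M ∩ I₃ M).Nonempty})
    (F : ℝ → ℝ) (hF : ∀ t, F t = max |t| (max |t^3 + x₁| |cbrt (t - x₂)|)) :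
    ∃ Mx ∈ A, (∀ M ∈ A, Mx ≤ M) ∧
      ∃ T : ℝ, I₁ Mx ∩ I₂ Mx ∩ I₃ Mx = {T} ∧ (∀ t, Mx ≤ F t) ∧ F T = Mx := by
  -- membership equivalence
  have key : ∀ M t, t ∈ I₁ M ∩ I₂ M ∩ I₃ M ↔ F t ≤ M := by
    intro M t
    rw [hI₁, hI₂, hI₃, hF]
    exact mem_iff x₁ x₂ M t
  -- F is nonnegative and ≥ |t|
  have habs : ∀ t, |t| ≤ F t := fun t => by rw [hF]; exact le_max_left _ _
  have h0 : ∀ t, 0 ≤ F t := fun t => (abs_nonneg t).trans (habs t)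
  -- continuity of F
  have hcont : Continuous F := by
    have : F = fun t => max |t| (max |t^3 + x₁| (|t - x₂| ^ ((1:ℝ)/3))) := by
      funext t; rw [hF, abs_cbrt]
    rw [this]
    exact continuous_abs.max
      (((continuous_pow 3).add continuous_const).abs.max
        (((continuous_id.sub continuous_const).abs).rpow_const fun x => Or.inr (by norm_num)))
  -- minimize F on a compact interval
  obtain ⟨T₀, hT₀K, hmin⟩ :=
    (isCompact_Icc (a := -(F 0)) (b := F 0)).exists_isMinOn
      ⟨0, Set.mem_Icc.mpr ⟨neg_nonpos.mpr (h0 0), h0 0⟩⟩ hcont.continuousOn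
  have hglobal : ∀ t, F T₀ ≤ F t := by
    intro t
    by_cases ht : t ∈ Set.Icc (-(F 0)) (F 0)
    · exact hmin ht
    · have h1 : F 0 < |t| := by
        rcases not_and_or.mp (Set.mem_Icc.not.mp ht) with h | h
        · push_neg at h; calc F 0 < -t := by linarith
            _ ≤ |t| := (neg_le_abs t)
        · push_neg at h; exact lt_of_lt_of_le h (le_abs_self t)
      calc F T₀ ≤ F 0 := hmin (Set.mem_Icc.mpr ⟨neg_nonpos.mpr (h0 0), h0 0⟩)
        _ ≤ F t := le_of_lt (h1.trans_le (habs t))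
  set Mx := F T₀ with hMx
  have hMx0 : 0 ≤ Mx := h0 T₀
  refine ⟨Mx, ?_, ?_, T₀, ?_, hglobal, rfl⟩
  · rw [hA]; exact ⟨hMx0, T₀, (key Mx T₀).mpr le_rfl⟩
  · intro M hM
    rw [hA] at hM
    obtain ⟨hM0, t, ht⟩ := hM
    exact le_trans (hglobal t) ((key M t).mp ht)
  · -- the intersection is a singleton
    have hT₀mem : T₀ ∈ I₁ Mx ∩ I₂ Mx ∩ I₃ Mx := (key Mx T₀).mpr le_rfl
    -- level set is contained in a finite set
    have hlevel : {v : ℝ | F v = Mx} ⊆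
        ({Mx, -Mx, cbrt (Mx - x₁), cbrt (-Mx - x₁), x₂ + Mx^3, x₂ - Mx^3} : Set ℝ) := by
      intro v hv
      simp only [Set.mem_setOf_eq] at hv
      rw [hF] at hv
      simp only [Set.mem_insert_iff, Set.mem_singleton_iff]
      rcases max_choice |v| (max |v^3 + x₁| |cbrt (v - x₂)|) with h | h
      · rw [h] at hv
        rcases (abs_eq hMx0).mp hv with h1 | h1
        · left; exact h1
        · right; left; exact h1
      · rw [h] at hv
        rcases max_choice |v^3 + x₁| |cbrt (v - x₂)| with h' | h'
        · rw [h'] at hv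
          rcases (abs_eq hMx0).mp hv with h1 | h1
          · right; right; left
            rw [← cbrt_cube v, show v^3 = Mx - x₁ by linarith]
          · right; right; right; left
            rw [← cbrt_cube v, show v^3 = -Mx - x₁ by linarith]
        · rw [h'] at hv
          rcases (abs_eq hMx0).mp hv with h1 | h1
          · right; right; right; right; left
            have h2 := congrArg (fun y : ℝ => y ^ 3) h1
            simp only [cube_cbrt] at h2
            linarith
          · right; right; right; right; right
            have h2 := congrArg (fun y : ℝ => y ^ 3) h1
            simp only [cube_cbrt, Odd.neg_pow (by decide : Odd 3)] at h2
            linarith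
    have hfin : ({Mx, -Mx, cbrt (Mx - x₁), cbrt (-Mx - x₁), x₂ + Mx^3, x₂ - Mx^3} : Set ℝ).Finite :=
      Set.toFinite _
    -- order connectedness
    have hoc : Set.OrdConnected (I₁ Mx ∩ I₂ Mx ∩ I₃ Mx) := by
      rw [hI₁, hI₂, hI₃]
      exact (Set.ordConnected_Icc.inter Set.ordConnected_Icc).inter Set.ordConnected_Icc
    ext u
    simp only [Set.mem_singleton_iff]
    constructor
    · intro hu
      by_contra hne
      have hsub : Set.Icc (min u T₀) (max u T₀) ⊆ I₁ Mx ∩ I₂ Mx ∩ I₃ Mx := by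
        rcases le_total u T₀ with h | h
        · rw [min_eq_left h, max_eq_right h]; exact hoc.out hu hT₀mem
        · rw [min_eq_right h, max_eq_left h]; exact hoc.out hT₀mem hu
      have hsub2 : Set.Icc (min u T₀) (max u T₀) ⊆ {v : ℝ | F v = Mx} := by
        intro v hv
        exact le_antisymm ((key Mx v).mp (hsub hv)) (hglobal v)
      have hlt : min u T₀ < max u T₀ := min_lt_max.mpr hne
      exact (Set.Icc_infinite hlt) (hfin.subset (hsub2.trans hlevel))
    · rintro rfl; exact hT₀mem
end

section
/- If φ : 𝕐 → ℝ ∪ {±∞} is continuous at γ(x*) with finite value there, Ω is closed, γ(x*) ∈ Ω, and γ(x*) is a generalized local solution of minimizing φ over Ω (some neighbourhood 𝒴* satisfies inf φ_Ω(𝒴*) = inf ACC(φ_Ω; γ(x*))), then γ(x*) is an ordinary local solution: φ(y) ≥ φ(γ(x*)) for all y in some neighbourhood of γ(x*) intersected with Ω. -/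
open Filter Topology

/-- `ACC f a` : union over all sequences converging to `a` of the accumulation
points of the image sequences. -/
def ACC {α β : Type*} [TopologicalSpace α] [TopologicalSpace β] (f : α → β) (a : α) : Set β :=
  {b | ∃ u : ℕ → α, Tendsto u atTop (𝓝 a) ∧ MapClusterPt b atTop (f ∘ u)}

/-- `ACCOn f A a` : as `ACC` but only over sequences taking values in `A`. -/
def ACCOn {α β : Type*} [TopologicalSpace α] [TopologicalSpace β]
    (f : α → β) (A : Set α) (a : α) : Set β :=
  {b | ∃ u : ℕ → α, (∀ k, u k ∈ A) ∧ Tendsto u atTop (𝓝 a) ∧ MapClusterPt b atTop (f ∘ u)}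

theorem stmt17 {𝕐 : Type*} [MetricSpace 𝕐]
    (φ : 𝕐 → EReal) (Ω : Set 𝕐) (hΩ : IsClosed Ω)
    (φΩ : 𝕐 → EReal) (hφΩ : (∀ y ∈ Ω, φΩ y = φ y) ∧ ∀ y ∉ Ω, φΩ y = ⊤)
    (ystar : 𝕐) (hyΩ : ystar ∈ Ω)
    (hcont : ContinuousAt φ ystar) (hfin : φ ystar ≠ ⊤ ∧ φ ystar ≠ ⊥)
    (hgen : ∃ 𝒴 ∈ 𝓝 ystar, sInf (φΩ '' 𝒴) = sInf (ACC φΩ ystar)) :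
    ∃ U ∈ 𝓝 ystar, ∀ y ∈ U ∩ Ω, φ ystar ≤ φ y := by
  obtain ⟨𝒴, h𝒴, heq⟩ := hgen
  refine ⟨𝒴, h𝒴, fun y hy => ?_⟩
  have h1 : sInf (φΩ '' 𝒴) ≤ φ y := by
    rw [← hφΩ.1 y hy.2]
    exact sInf_le ⟨y, hy.1, rfl⟩
  have h2 : φ ystar ≤ sInf (ACC φΩ ystar) := by
    apply le_sInf
    rintro b ⟨u, hu, hb⟩
    by_contra hlt
    push_neg at hlt
    obtain ⟨c, hbc, hcφ⟩ := exists_between hlt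
    have hfreq : ∃ᶠ k in atTop, (φΩ ∘ u) k ∈ Set.Iio c :=
      mapClusterPt_iff_frequently.1 hb _ (Iio_mem_nhds hbc)
    have hev : ∀ᶠ k in atTop, φ (u k) ∈ Set.Ioi c :=
      (hcont.tendsto.comp hu) (Ioi_mem_nhds hcφ)
    have hev' : ∀ᶠ k in atTop, c < φΩ (u k) := hev.mono fun k hk => by
      by_cases h : u k ∈ Ω
      · rwa [hφΩ.1 _ h]
      · rw [hφΩ.2 _ h]; exact hcφ.trans_le le_top
    obtain ⟨k, hk1, hk2⟩ := (hfreq.and_eventually hev').exists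
    exact absurd hk1 (not_lt.2 hk2.le)
  calc φ ystar ≤ sInf (ACC φΩ ystar) := h2
    _ = sInf (φΩ '' 𝒴) := heq.symm
    _ ≤ φ y := h1
end
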